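/- arXiv:1710.09606 — 2 statements merged into one kernel-verified Lean document; each statement's English description precedes it below -/
import Mathlib

section
/- Let Ω ⊆ 𝔽ⁿ be a finitely generated P-closed set with finite P-basis B = {b₁,…,b_M} and let {F₁,…,F_M} be a dual P-basis of B. Then Im(E_Ω) is a left 𝔽-vector space of dimension M = Rk(Ω), and the evaluations E_Ω(F₁), E_Ω(F₂), …, E_Ω(F_M) ∈ 𝔽^Ω form a left 𝔽-basis of Im(E_Ω). -/
/-!
Every skew polynomial `F` has a unique remainder `c ∈ 𝔽` modulo the left ideal generated by the
`xᵢ - aᵢ`: it exists because the last term of `m xᵢ = m (xᵢ - aᵢ) + m aᵢ` has lower degree, and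
it is unique because a nonzero element `Σ Kᵢ (xᵢ - aᵢ)` has a coefficient of degree
`1 + max deg Kᵢ`. Hence evaluation is left `𝔽`-linear. For any `G`, the polynomial
`G - Σ G(bᵢ) Fᵢ` vanishes on `B`, hence on `Ω = B̄`, so `E_Ω(G) = Σ G(bᵢ) E_Ω(Fᵢ)`; evaluating at
the `bⱼ` shows that the `E_Ω(Fᵢ)` are independent. Finally, restricting functions to any P-basis
`B'` of `Ω` is injective on `Im(E_Ω)`, so every P-basis has at least `M` elements and `Rk(Ω) = M`.
-/

/- Common setup: free multivariate skew polynomial rings over a division ring. -/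

open Matrix Finsupp

/-- The underlying left `𝔽`-module of the free multivariate skew polynomial ring:
the free left `𝔽`-module with basis the free monoid on `n` symbols. -/
abbrev SkewPoly (𝔽 : Type*) [DivisionRing 𝔽] (n : ℕ) : Type _ := FreeMonoid (Fin n) →₀ 𝔽

namespace SkewPoly

variable {𝔽 : Type*} [DivisionRing 𝔽] {n : ℕ}

/-- The variable `xᵢ` as a skew polynomial. -/
noncomputable def X (𝔽 : Type*) [DivisionRing 𝔽] {n : ℕ} (i : Fin n) : SkewPoly 𝔽 n :=
  Finsupp.single (FreeMonoid.of i) 1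

/-- The constant `a` as a skew polynomial (coefficient on the empty word). -/
noncomputable def C {𝔽 : Type*} [DivisionRing 𝔽] (n : ℕ) (a : 𝔽) :
    SkewPoly 𝔽 n := Finsupp.single 1 a

/-- The degree of a skew polynomial: the maximal length of a word in its support
(`⊥` for the zero polynomial). -/
noncomputable def deg (F : SkewPoly 𝔽 n) : WithBot ℕ :=
  F.support.sup fun m => ((FreeMonoid.length m : ℕ) : WithBot ℕ)

/-- A matrix morphism `σ : 𝔽 → Mₙ(𝔽)`: a unital ring homomorphism. -/
def IsMatrixMorphism (σ : 𝔽 → Matrix (Fin n) (Fin n) 𝔽) : Prop :=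
  σ 1 = 1 ∧ (∀ a b : 𝔽, σ (a + b) = σ a + σ b) ∧ (∀ a b : 𝔽, σ (a * b) = σ a * σ b)

/-- A `σ`-vector derivation `δ : 𝔽 → 𝔽ⁿ`: additive with `δ(ab) = σ(a)δ(b) + δ(a)b`. -/
def IsVectorDerivation (σ : 𝔽 → Matrix (Fin n) (Fin n) 𝔽) (δ : 𝔽 → Fin n → 𝔽) : Prop :=
  (∀ a b : 𝔽, δ (a + b) = δ a + δ b) ∧
    (∀ a b : 𝔽, δ (a * b) = σ a *ᵥ δ b + fun i => δ a i * b)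

/-- A multiplication on the free module `SkewPoly 𝔽 n` making it a ring (with the
existing addition) whose identity is the empty word, which restricts to concatenation
on monomials, is additive on degrees of nonzero elements, and for which left
multiplication by constants is scalar multiplication. -/
structure RawMul (𝔽 : Type*) [DivisionRing 𝔽] (n : ℕ) where
  /-- the multiplication -/
  mul : SkewPoly 𝔽 n → SkewPoly 𝔽 n → SkewPoly 𝔽 n
  mul_add : ∀ F G H : SkewPoly 𝔽 n, mul F (G + H) = mul F G + mul F H
  add_mul : ∀ F G H : SkewPoly 𝔽 n, mul (F + G) H = mul F H + mul G H
  mul_assoc : ∀ F G H : SkewPoly 𝔽 n, mul (mul F G) H = mul F (mul G H)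
  one_mul : ∀ F : SkewPoly 𝔽 n, mul (C n 1) F = F
  mul_one : ∀ F : SkewPoly 𝔽 n, mul F (C n 1) = F
  mono_mul_mono : ∀ m m' : FreeMonoid (Fin n),
    mul (Finsupp.single m 1) (Finsupp.single m' 1) = Finsupp.single (m * m') 1
  const_mul : ∀ (a : 𝔽) (F : SkewPoly 𝔽 n), mul (C n a) F = a • F
  deg_mul : ∀ F G : SkewPoly 𝔽 n, F ≠ 0 → G ≠ 0 → deg (mul F G) = deg F + deg G

/-- The multiplication `S` satisfies the commutation rule
`xᵢ a = Σⱼ σ_{i,j}(a) xⱼ + δᵢ(a)`. -/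
def HasCommRule (S : RawMul 𝔽 n) (σ : 𝔽 → Matrix (Fin n) (Fin n) 𝔽)
    (δ : 𝔽 → Fin n → 𝔽) : Prop :=
  ∀ (i : Fin n) (a : 𝔽),
    S.mul (X 𝔽 i) (C n a) =
      (∑ j : Fin n, Finsupp.single (FreeMonoid.of j) (σ a i j)) + C n (δ a i)

/-- `F = Σᵢ Gᵢ (xᵢ - aᵢ) + b`, i.e. `b` is a remainder of `F` upon right division
by `x₁ - a₁, …, xₙ - aₙ`; equivalently `F - b` lies in the left ideal generated by
the `xᵢ - aᵢ`. -/
def Decomposes (S : RawMul 𝔽 n) (a : Fin n → 𝔽) (F : SkewPoly 𝔽 n) (b : 𝔽) : Prop :=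
  ∃ G : Fin n → SkewPoly 𝔽 n,
    F = (∑ i : Fin n, S.mul (G i) (X 𝔽 i - C n (a i))) + C n b

/-- The evaluation of `F` at the point `a`: the unique `b ∈ 𝔽` such that `F - b`
lies in the left ideal generated by `x₁ - a₁, …, xₙ - aₙ`. -/
noncomputable def eval (S : RawMul 𝔽 n) (a : Fin n → 𝔽) (F : SkewPoly 𝔽 n) : 𝔽 :=
  letI := Classical.propDecidable (∃ b : 𝔽, Decomposes S a F b)
  if h : ∃ b : 𝔽, Decomposes S a F b then h.choose else 0

/-- The `(σ,δ)`-conjugate `a^c = σ(c) a c⁻¹ + δ(c) c⁻¹` of `a` with respect to `c`. -/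
noncomputable def conj (σ : 𝔽 → Matrix (Fin n) (Fin n) 𝔽) (δ : 𝔽 → Fin n → 𝔽)
    (a : Fin n → 𝔽) (c : 𝔽) : Fin n → 𝔽 :=
  fun i => (σ c *ᵥ a) i * c⁻¹ + δ c i * c⁻¹

/-- `I(Ω)`: the set of skew polynomials vanishing at every point of `Ω`. -/
def zeroIdeal (S : RawMul 𝔽 n) (Ω : Set (Fin n → 𝔽)) : Set (SkewPoly 𝔽 n) :=
  {F | ∀ a ∈ Ω, eval S a F = 0}

/-- The left ideal of `SkewPoly 𝔽 n` generated by `x₁ - a₁, …, xₙ - aₙ`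
(the set of sums of left multiples of the generators). -/
def pointIdeal (S : RawMul 𝔽 n) (a : Fin n → 𝔽) : Set (SkewPoly 𝔽 n) :=
  {F | ∃ G : Fin n → SkewPoly 𝔽 n, F = ∑ i : Fin n, S.mul (G i) (X 𝔽 i - C n (a i))}

/-- The P-closure `Ω̄ = Z(I(Ω))` of a set of points `Ω`. -/
def pClosure (S : RawMul 𝔽 n) (Ω : Set (Fin n → 𝔽)) : Set (Fin n → 𝔽) :=
  {a | ∀ F ∈ zeroIdeal S Ω, eval S a F = 0}

/-- `Ω` is P-closed if it equals its P-closure. -/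
def IsPClosed (S : RawMul 𝔽 n) (Ω : Set (Fin n → 𝔽)) : Prop := pClosure S Ω = Ω

/-- `B` is P-independent: no point of `B` lies in the P-closure of the rest. -/
def PIndep (S : RawMul 𝔽 n) (B : Set (Fin n → 𝔽)) : Prop :=
  ∀ a ∈ B, a ∉ pClosure S (B \ {a})

/-- `B` is a P-basis of `Ω`: a P-independent subset of `Ω` whose P-closure is `Ω`. -/
def IsPBasis (S : RawMul 𝔽 n) (B Ω : Set (Fin n → 𝔽)) : Prop :=
  B ⊆ Ω ∧ PIndep S B ∧ pClosure S B = Ω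

/-- `Ω` is finitely generated: it is the P-closure of a finite subset of itself. -/
def FinGen (S : RawMul 𝔽 n) (Ω : Set (Fin n → 𝔽)) : Prop :=
  ∃ G : Set (Fin n → 𝔽), G.Finite ∧ G ⊆ Ω ∧ pClosure S G = Ω

/-- The rank of a P-closed set: the (common) cardinality of its P-bases. -/
noncomputable def pRank (S : RawMul 𝔽 n) (Ω : Set (Fin n → 𝔽)) : ℕ :=
  sInf {k : ℕ | ∃ B : Finset (Fin n → 𝔽), IsPBasis S ↑B Ω ∧ B.card = k}

/-- The image of the evaluation map `E_Ω : R → 𝔽^Ω`, as a left `𝔽`-subspace of `𝔽^Ω`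
(the span of the image; the image is itself a subspace since evaluation is left linear). -/
noncomputable def evalSpan (S : RawMul 𝔽 n) (Ω : Set (Fin n → 𝔽)) :
    Submodule 𝔽 (↥Ω → 𝔽) :=
  Submodule.span 𝔽 (Set.range fun F : SkewPoly 𝔽 n => fun a : ↥Ω => eval S ↑a F)

/-- `I` is a two-sided ideal with respect to the multiplication `S`. -/
def IsTwoSidedIdealSet (S : RawMul 𝔽 n) (I : Set (SkewPoly 𝔽 n)) : Prop :=
  (0 : SkewPoly 𝔽 n) ∈ I ∧ (∀ F ∈ I, ∀ G ∈ I, F + G ∈ I) ∧ (∀ F ∈ I, -F ∈ I) ∧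
    (∀ F ∈ I, ∀ G : SkewPoly 𝔽 n, S.mul G F ∈ I) ∧
    (∀ F ∈ I, ∀ G : SkewPoly 𝔽 n, S.mul F G ∈ I)


/-- The left row-rank of the skew Vandermonde matrix `V_d(G)`: the dimension of the
left `𝔽`-span of its rows `(N_m(c))_{c ∈ G}`, indexed by the words `m` of length `< d`,
where `N_m(c)` is the evaluation of the monomial `m` at the point `c`. -/
noncomputable def vandermondeRank (S : RawMul 𝔽 n) (G : Finset (Fin n → 𝔽)) (d : ℕ) :
    Cardinal :=
  Module.rank 𝔽 ↥(Submodule.span 𝔽 (Set.range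
    fun m : {m : FreeMonoid (Fin n) // FreeMonoid.length m < d} =>
      fun c : ↥G => eval S ↑c (Finsupp.single (m : FreeMonoid (Fin n)) (1 : 𝔽))))

end SkewPoly

open SkewPoly

namespace FreeMonoid

variable {α : Type*}

theorem mul_of_inj {m m' : FreeMonoid α} {i j : α} :
    m * of i = m' * of j ↔ m = m' ∧ i = j := by
  rw [← toList.injective.eq_iff, toList_mul, toList_mul, toList_of, toList_of,
    List.append_singleton_inj, toList.injective.eq_iff]

theorem eq_one_or_exists_eq_mul_of (m : FreeMonoid α) : m = 1 ∨ ∃ m' i, m = m' * of i := by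
  rcases List.eq_nil_or_concat m.toList with h | ⟨l, i, h⟩
  · exact .inl (toList.injective h)
  · exact .inr ⟨ofList l, i, toList.injective (by simpa using h)⟩

end FreeMonoid

namespace SkewPoly

open FreeMonoid

variable {𝔽 : Type*} [DivisionRing 𝔽] {n : ℕ}

namespace RawMul

variable (S : RawMul 𝔽 n)

noncomputable def mulLeft (F : SkewPoly 𝔽 n) : SkewPoly 𝔽 n →+ SkewPoly 𝔽 n :=
  AddMonoidHom.mk' (S.mul F) (S.mul_add F)

noncomputable def mulRight (G : SkewPoly 𝔽 n) : SkewPoly 𝔽 n →+ SkewPoly 𝔽 n :=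
  AddMonoidHom.mk' (S.mul · G) fun F F' => S.add_mul F F' G

theorem zero_mul (G : SkewPoly 𝔽 n) : S.mul 0 G = 0 := (S.mulRight G).map_zero

theorem mul_zero (F : SkewPoly 𝔽 n) : S.mul F 0 = 0 := (S.mulLeft F).map_zero

theorem sub_mul (F F' G : SkewPoly 𝔽 n) : S.mul (F - F') G = S.mul F G - S.mul F' G :=
  (S.mulRight G).map_sub F F'

theorem mul_sub (F G G' : SkewPoly 𝔽 n) : S.mul F (G - G') = S.mul F G - S.mul F G' :=
  (S.mulLeft F).map_sub G G'

theorem smul_mul (c : 𝔽) (F G : SkewPoly 𝔽 n) : S.mul (c • F) G = c • S.mul F G := by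
  rw [← S.const_mul, S.mul_assoc, S.const_mul]

theorem single_mul_single_one (m m' : FreeMonoid (Fin n)) (c : 𝔽) :
    S.mul (Finsupp.single m c) (Finsupp.single m' 1) = Finsupp.single (m * m') c := by
  rw [← Finsupp.smul_single_one, S.smul_mul, S.mono_mul_mono, Finsupp.smul_single_one]

theorem mul_X (F : SkewPoly 𝔽 n) (i : Fin n) :
    S.mul F (X 𝔽 i) = Finsupp.mapDomain (· * of i) F := by
  induction F using Finsupp.induction_linear with
  | zero => rw [S.zero_mul, Finsupp.mapDomain_zero]
  | add F F' hF hF' => rw [S.add_mul, Finsupp.mapDomain_add, hF, hF']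
  | single m c => rw [X, S.single_mul_single_one, Finsupp.mapDomain_single]

theorem sum_mul_X_apply_mul_of (K : Fin n → SkewPoly 𝔽 n) (m : FreeMonoid (Fin n)) (i : Fin n) :
    (∑ j, S.mul (K j) (X 𝔽 j)) (m * of i) = K i m := by
  simp only [Finsupp.finsetSum_apply, S.mul_X]
  rw [Fintype.sum_eq_single i, Finsupp.mapDomain_apply (fun _ _ h => (mul_of_inj.mp h).1)]
  refine fun j hji => Finsupp.mapDomain_of_notMem_range _ _ ?_
  rintro ⟨m', hm'⟩
  exact hji (mul_of_inj.mp hm').2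

end RawMul

theorem deg_zero : deg (0 : SkewPoly 𝔽 n) = ⊥ := rfl

theorem deg_le_iff {F : SkewPoly 𝔽 n} {k : ℕ} :
    deg F ≤ k ↔ ∀ m ∈ F.support, m.length ≤ k := by
  simp only [deg, Finset.sup_le_iff, Nat.cast_le]

theorem apply_eq_zero_of_deg_lt {F : SkewPoly 𝔽 n} {w : FreeMonoid (Fin n)}
    (h : deg F < w.length) : F w = 0 :=
  Finsupp.notMem_support_iff.mp fun hw =>
    (Finset.le_sup (f := fun m : FreeMonoid (Fin n) => (m.length : WithBot ℕ)) hw).not_gt h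

theorem deg_single (m : FreeMonoid (Fin n)) {c : 𝔽} (hc : c ≠ 0) :
    deg (Finsupp.single m c) = m.length := by
  rw [deg, Finsupp.support_single m hc, Finset.sup_singleton]

theorem C_zero : C n (0 : 𝔽) = 0 := Finsupp.single_zero 1

theorem C_sub (c c' : 𝔽) : C n (c - c') = C n c - C n c' := Finsupp.single_sub 1 c c'

theorem C_ne_zero {c : 𝔽} (hc : c ≠ 0) : C n c ≠ 0 := Finsupp.single_ne_zero.mpr hc

theorem deg_C {c : 𝔽} (hc : c ≠ 0) : deg (C n c) = 0 := deg_single 1 hc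

variable (S : RawMul 𝔽 n)

theorem deg_mul_C_le (F : SkewPoly 𝔽 n) (c : 𝔽) : deg (S.mul F (C n c)) ≤ deg F := by
  rcases eq_or_ne F 0 with rfl | hF
  · rw [S.zero_mul]
  rcases eq_or_ne c 0 with rfl | hc
  · rw [C_zero, S.mul_zero, deg_zero]
    exact bot_le
  rw [S.deg_mul F _ hF (C_ne_zero hc), deg_C hc, add_zero]

variable (a : Fin n → 𝔽)

theorem decomposes_C (c : 𝔽) : Decomposes S a (C n c) c :=
  ⟨0, by simp [S.zero_mul]⟩

theorem decomposes_mul_sub (G : SkewPoly 𝔽 n) (i : Fin n) :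
    Decomposes S a (S.mul G (X 𝔽 i - C n (a i))) 0 := by
  refine ⟨Pi.single i G, ?_⟩
  rw [Fintype.sum_eq_single i fun j hj => by rw [Pi.single_eq_of_ne hj, S.zero_mul],
    Pi.single_eq_same, C_zero, add_zero]

variable {S a}

theorem Decomposes.add {F F' : SkewPoly 𝔽 n} {c c' : 𝔽} (h : Decomposes S a F c)
    (h' : Decomposes S a F' c') : Decomposes S a (F + F') (c + c') := by
  obtain ⟨G, rfl⟩ := h
  obtain ⟨G', rfl⟩ := h'
  refine ⟨G + G', ?_⟩
  simp only [Pi.add_apply, S.add_mul, Finset.sum_add_distrib, C, Finsupp.single_add]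
  abel

theorem Decomposes.smul {F : SkewPoly 𝔽 n} {c : 𝔽} (h : Decomposes S a F c) (r : 𝔽) :
    Decomposes S a (r • F) (r * c) := by
  obtain ⟨G, rfl⟩ := h
  refine ⟨fun i => r • G i, ?_⟩
  simp only [smul_add, Finset.smul_sum, S.smul_mul, C, Finsupp.smul_single, smul_eq_mul]

variable (S a)

def decomposable : Submodule 𝔽 (SkewPoly 𝔽 n) where
  carrier := {F | ∃ c, Decomposes S a F c}
  add_mem' := fun ⟨_, h⟩ ⟨_, h'⟩ => ⟨_, h.add h'⟩
  zero_mem' := ⟨0, by simpa only [C_zero] using decomposes_C S a 0⟩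
  smul_mem' := fun r _ ⟨_, h⟩ => ⟨_, h.smul r⟩

theorem supported_length_lt_le_decomposable (d : ℕ) :
    Finsupp.supported 𝔽 𝔽 {m : FreeMonoid (Fin n) | m.length < d} ≤ decomposable S a := by
  induction d with
  | zero => simp [Finsupp.supported_empty]
  | succ d ih =>
    rw [Finsupp.supported_eq_span_single, Submodule.span_le]
    rintro _ ⟨w, hw, rfl⟩
    beta_reduce
    rcases eq_one_or_exists_eq_mul_of w with rfl | ⟨m, i, rfl⟩
    · exact ⟨1, decomposes_C S a 1⟩
    have hm : m.length < d := by simpa [length_mul] using hw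
    have hsplit : Finsupp.single (m * of i) (1 : 𝔽) =
        S.mul (Finsupp.single m 1) (X 𝔽 i - C n (a i)) +
          S.mul (Finsupp.single m 1) (C n (a i)) := by
      rw [← S.mul_add, sub_add_cancel, X, S.mono_mul_mono]
    have hlow : S.mul (Finsupp.single m 1) (C n (a i)) ∈ decomposable S a := by
      have hdeg : deg (S.mul (Finsupp.single m 1) (C n (a i))) ≤ m.length :=
        (deg_mul_C_le S _ _).trans (deg_single m one_ne_zero).le
      exact ih ((Finsupp.mem_supported _ _).mpr fun w hw => (deg_le_iff.mp hdeg w hw).trans_lt hm)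
    rw [SetLike.mem_coe, hsplit]
    exact add_mem ⟨0, decomposes_mul_sub S a _ i⟩ hlow

theorem exists_decomposes (F : SkewPoly 𝔽 n) : ∃ c, Decomposes S a F c :=
  supported_length_lt_le_decomposable S a (F.support.sup length + 1)
    ((Finsupp.mem_supported _ F).mpr fun _ hm => Nat.lt_succ_of_le (Finset.le_sup hm))

/-- Compare coefficients at `m₁ xᵢ₁`, where `m₁` is a word of maximal length in the supports
of the `Kᵢ`: on the left it is `Kᵢ₁(m₁) ≠ 0`, while every term on the right has lower degree. -/
theorem eq_zero_of_sum_mul_sub_eq_C (K : Fin n → SkewPoly 𝔽 n) (c : 𝔽)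
    (h : ∑ i, S.mul (K i) (X 𝔽 i - C n (a i)) = C n c) : c = 0 := by
  by_cases hK : ∀ i, K i = 0
  · simpa [hK, S.zero_mul, C] using h.symm
  simp only [not_forall] at hK
  obtain ⟨i₀, hi₀⟩ := hK
  obtain ⟨m₀, hm₀⟩ := Finsupp.support_nonempty_iff.mpr hi₀
  obtain ⟨⟨i₁, m₁⟩, hmem, hmax⟩ := (Finset.univ.sigma fun i => (K i).support).exists_max_image
    (fun p => p.2.length) ⟨⟨i₀, m₀⟩, Finset.mem_sigma.mpr ⟨Finset.mem_univ _, hm₀⟩⟩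
  set w := m₁ * of i₁
  have hw : (m₁.length : WithBot ℕ) < w.length := by
    exact_mod_cast (by simp [w, length_mul] : m₁.length < w.length)
  have hlow : ∀ i, deg (S.mul (K i) (C n (a i))) < w.length := fun i =>
    ((deg_mul_C_le S _ _).trans (deg_le_iff.mpr fun m hm =>
      hmax ⟨i, m⟩ (Finset.mem_sigma.mpr ⟨Finset.mem_univ _, hm⟩))).trans_lt hw
  have hC : C n c w = 0 := Finsupp.single_eq_of_ne (by simp [w])
  have key : ∑ i, S.mul (K i) (X 𝔽 i) = C n c + ∑ i, S.mul (K i) (C n (a i)) := by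
    rw [← h]
    simp only [S.mul_sub, Finset.sum_sub_distrib]
    abel
  have hcoeff := DFunLike.congr_fun key w
  rw [S.sum_mul_X_apply_mul_of, Finsupp.add_apply, hC, Finsupp.finsetSum_apply] at hcoeff
  simp only [apply_eq_zero_of_deg_lt (hlow _), Finset.sum_const_zero, add_zero] at hcoeff
  exact absurd hcoeff (Finsupp.mem_support_iff.mp (Finset.mem_sigma.mp hmem).2)

variable {S a}

theorem Decomposes.unique {F : SkewPoly 𝔽 n} {c c' : 𝔽} (h : Decomposes S a F c)
    (h' : Decomposes S a F c') : c = c' := by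
  obtain ⟨G, hG⟩ := h
  obtain ⟨G', hG'⟩ := h'
  refine sub_eq_zero.mp (eq_zero_of_sum_mul_sub_eq_C S a (G' - G) (c - c') ?_)
  simp only [Pi.sub_apply, S.sub_mul, Finset.sum_sub_distrib, C_sub]
  rw [sub_eq_sub_iff_add_eq_add, ← hG', add_comm, ← hG]

theorem eval_eq_of_decomposes {F : SkewPoly 𝔽 n} {c : 𝔽} (h : Decomposes S a F c) :
    eval S a F = c := by
  have hex : ∃ c, Decomposes S a F c := ⟨c, h⟩
  rw [eval, dif_pos hex]
  exact hex.choose_spec.unique h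

variable (S a) in
theorem decomposes_eval (F : SkewPoly 𝔽 n) : Decomposes S a F (eval S a F) := by
  obtain ⟨c, h⟩ := exists_decomposes S a F
  rwa [eval_eq_of_decomposes h]

variable (S a) in
noncomputable def leval : SkewPoly 𝔽 n →ₗ[𝔽] 𝔽 where
  toFun := eval S a
  map_add' F G := eval_eq_of_decomposes ((decomposes_eval S a F).add (decomposes_eval S a G))
  map_smul' r F := eval_eq_of_decomposes ((decomposes_eval S a F).smul r)

theorem eval_sub (F G : SkewPoly 𝔽 n) : eval S a (F - G) = eval S a F - eval S a G :=
  map_sub (leval S a) F G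

theorem eval_smul (r : 𝔽) (F : SkewPoly 𝔽 n) : eval S a (r • F) = r * eval S a F :=
  map_smul (leval S a) r F

theorem eval_sum {ι : Type*} (s : Finset ι) (G : ι → SkewPoly 𝔽 n) :
    eval S a (∑ i ∈ s, G i) = ∑ i ∈ s, eval S a (G i) :=
  map_sum (leval S a) G s

section Closure

variable (S) (Ω : Set (Fin n → 𝔽))

noncomputable def evalOn : SkewPoly 𝔽 n →ₗ[𝔽] (Ω → 𝔽) :=
  LinearMap.pi fun x => leval S x

theorem evalSpan_eq_range : evalSpan S Ω = LinearMap.range (evalOn S Ω) := by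
  rw [evalSpan, ← Submodule.span_eq (LinearMap.range (evalOn S Ω)), LinearMap.coe_range]
  rfl

theorem subset_pClosure : Ω ⊆ pClosure S Ω := fun _ hx _ hF => hF _ hx

theorem rank_evalSpan_pClosure_le (B : Finset (Fin n → 𝔽)) :
    Module.rank 𝔽 (evalSpan S (pClosure S B)) ≤ B.card := by
  let restrict := LinearMap.funLeft 𝔽 𝔽 (Set.inclusion (subset_pClosure S ↑B)) ∘ₗ
    (evalSpan S (pClosure S B)).subtype
  have hinj : Function.Injective restrict := by
    refine (injective_iff_map_eq_zero _).mpr fun ⟨u, hu⟩ hzero => ?_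
    rw [evalSpan_eq_range] at hu
    obtain ⟨G, rfl⟩ := hu
    refine Subtype.ext (funext fun x => x.2 G fun y hy => ?_)
    exact congrFun hzero ⟨y, hy⟩
  simpa using LinearMap.rank_le_of_injective restrict hinj

end Closure

section Dual

variable {ι : Type*} [Fintype ι] [DecidableEq ι]

variable (S) in
def IsDual (b : ι → (Fin n → 𝔽)) (F : ι → SkewPoly 𝔽 n) : Prop :=
  ∀ i j, eval S (b j) (F i) = if i = j then 1 else 0

variable {Ω : Set (Fin n → 𝔽)} {b : ι → (Fin n → 𝔽)} {F : ι → SkewPoly 𝔽 n}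

theorem eval_sum_smul_of_dual (hdual : IsDual S b F) (r : ι → 𝔽) (j : ι) :
    eval S (b j) (∑ i, r i • F i) = r j := by
  simp [eval_sum, eval_smul, hdual _ j]

theorem eval_eq_sum_of_dual (hdual : IsDual S b F) (G : SkewPoly 𝔽 n) {x : Fin n → 𝔽}
    (hx : x ∈ pClosure S (Set.range b)) :
    eval S x G = ∑ i, eval S (b i) G * eval S x (F i) := by
  have hvanish : eval S x (G - ∑ i, eval S (b i) G • F i) = 0 := by
    refine hx _ ?_
    rintro _ ⟨j, rfl⟩
    rw [eval_sub, eval_sum_smul_of_dual hdual, sub_self]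
  simpa [eval_sub, eval_sum, eval_smul, sub_eq_zero] using hvanish

theorem linearIndependent_eval_of_dual (hdual : IsDual S b F) (hb : Set.range b ⊆ Ω) :
    LinearIndependent 𝔽 fun i (x : Ω) => eval S ↑x (F i) := by
  refine Fintype.linearIndependent_iff.mpr fun r hr j => ?_
  simpa [Finset.sum_apply, hdual _ j] using congrFun hr ⟨b j, hb ⟨j, rfl⟩⟩

theorem span_eval_of_dual (hdual : IsDual S b F) (hΩ : Ω ⊆ pClosure S (Set.range b)) :
    Submodule.span 𝔽 (Set.range fun i (x : Ω) => eval S ↑x (F i)) = evalSpan S Ω := by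
  rw [evalSpan_eq_range]
  refine le_antisymm (Submodule.span_le.mpr ?_) ?_
  · rintro _ ⟨i, rfl⟩
    exact ⟨F i, rfl⟩
  · rintro _ ⟨G, rfl⟩
    have hG : evalOn S Ω G = ∑ i, eval S (b i) G • fun x : Ω => eval S ↑x (F i) := by
      ext x
      simp only [Finset.sum_apply, Pi.smul_apply, smul_eq_mul]
      exact eval_eq_sum_of_dual hdual G (hΩ x.2)
    rw [hG]
    exact Submodule.sum_mem _ fun i _ => Submodule.smul_mem _ _ (Submodule.subset_span ⟨i, rfl⟩)

theorem rank_evalSpan_of_dual (hdual : IsDual S b F) (hb : Set.range b ⊆ Ω)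
    (hΩ : Ω ⊆ pClosure S (Set.range b)) :
    Module.rank 𝔽 (evalSpan S Ω) = Fintype.card ι := by
  classical
  have hli := linearIndependent_eval_of_dual hdual hb
  rw [← span_eval_of_dual hdual hΩ, rank_span hli, Cardinal.mk_fintype,
    Set.card_range_of_injective hli.injective]

end Dual

variable {Ω : Set (Fin n → 𝔽)}

theorem pRank_le_card {B : Finset (Fin n → 𝔽)} (hB : IsPBasis S B Ω) : pRank S Ω ≤ B.card :=
  Nat.sInf_le ⟨B, hB, rfl⟩

theorem rank_evalSpan_le_pRank (h : ∃ B : Finset (Fin n → 𝔽), IsPBasis S B Ω) :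
    Module.rank 𝔽 (evalSpan S Ω) ≤ pRank S Ω := by
  obtain ⟨B₀, hB₀⟩ := h
  obtain ⟨B, hB, hcard⟩ : pRank S Ω ∈ _ := Nat.sInf_mem ⟨_, B₀, hB₀, rfl⟩
  calc Module.rank 𝔽 (evalSpan S Ω) = Module.rank 𝔽 (evalSpan S (pClosure S B)) := by
        rw [hB.2.2]
    _ ≤ B.card := rank_evalSpan_pClosure_le S B
    _ = pRank S Ω := by rw [hcard]

end SkewPoly

theorem stmt17_general {𝔽 : Type*} [DivisionRing 𝔽] {n : ℕ} (S : RawMul 𝔽 n) (Ω : Set (Fin n → 𝔽))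
    (M : ℕ) (b : Fin M → (Fin n → 𝔽))
    (hB : IsPBasis S (Set.range b) Ω) (F : Fin M → SkewPoly 𝔽 n)
    (hdual : ∀ i j : Fin M, eval S (b j) (F i) = if i = j then 1 else 0) :
    Module.rank 𝔽 ↥(evalSpan S Ω) = (M : Cardinal) ∧ pRank S Ω = M ∧
    LinearIndependent 𝔽 (fun i : Fin M => (fun a : ↥Ω => eval S (↑a) (F i))) ∧
    Submodule.span 𝔽 (Set.range fun i : Fin M => (fun a : ↥Ω => eval S (↑a) (F i))) =
      evalSpan S Ω := by
  classical
  have hbΩ : Set.range b ⊆ Ω := hB.1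
  have hΩb : Ω ⊆ pClosure S (Set.range b) := hB.2.2.ge
  have hrank : Module.rank 𝔽 (evalSpan S Ω) = M := by
    rw [rank_evalSpan_of_dual hdual hbΩ hΩb, Fintype.card_fin]
  have himage : IsPBasis S ↑(Finset.univ.image b) Ω := by
    rwa [Finset.coe_image, Finset.coe_univ, Set.image_univ]
  refine ⟨hrank, le_antisymm ?_ ?_, linearIndependent_eval_of_dual hdual hbΩ,
    span_eval_of_dual hdual hΩb⟩
  · exact (pRank_le_card himage).trans (Finset.card_image_le.trans (by simp))
  · exact_mod_cast hrank ▸ rank_evalSpan_le_pRank ⟨_, himage⟩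

/-- For a finitely generated P-closed set `Ω` with P-basis
`b₁, …, b_M` and dual P-basis `F₁, …, F_M`: the image of `E_Ω` has dimension
`M = Rk(Ω)` and the evaluations `E_Ω(Fᵢ)` form a left `𝔽`-basis of it. -/
theorem stmt17 {𝔽 : Type*} [DivisionRing 𝔽] {n : ℕ} (hn : 0 < n)
    (σ : 𝔽 → Matrix (Fin n) (Fin n) 𝔽) (δ : 𝔽 → Fin n → 𝔽)
    (hσ : IsMatrixMorphism σ) (hδ : IsVectorDerivation σ δ)
    (S : RawMul 𝔽 n) (hS : HasCommRule S σ δ)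
    (Ω : Set (Fin n → 𝔽)) (hΩ : IsPClosed S Ω) (hfg : FinGen S Ω)
    (M : ℕ) (b : Fin M → (Fin n → 𝔽)) (hbinj : Function.Injective b)
    (hB : IsPBasis S (Set.range b) Ω) (F : Fin M → SkewPoly 𝔽 n)
    (hdual : ∀ i j : Fin M, eval S (b j) (F i) = if i = j then 1 else 0) :
    Module.rank 𝔽 ↥(evalSpan S Ω) = (M : Cardinal) ∧ pRank S Ω = M ∧
    LinearIndependent 𝔽 (fun i : Fin M => (fun a : ↥Ω => eval S (↑a) (F i))) ∧
    Submodule.span 𝔽 (Set.range fun i : Fin M => (fun a : ↥Ω => eval S (↑a) (F i))) =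
      evalSpan S Ω :=
  stmt17_general S Ω M b hB F hdual
end

section
/- Let G ⊆ 𝔽ⁿ be a finite set with M elements and let Ω = Ḡ be its P-closure. Then the dimension of the left 𝔽-span of the rows of the skew Vandermonde matrix V_M(G) equals Rk(Ω). Moreover, a subset B ⊆ G is a P-basis of Ω if and only if |B| = Rk(Ω) and the left row-rank of V_{|B|}(B) equals |B|. -/
/- Common setup: free multivariate skew polynomial rings over a division ring. -/

open Matrix Finsupp

open SkewPoly

/-! Evaluation at `a` is the left-linear functional `E_a(F) = Σ_m F_m N_m(a)`: every word `m` is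
congruent to `N_m(a)` modulo the left ideal generated by the `xᵢ - aᵢ`, and `E_a` kills that ideal
because `E_a(xᵢ) = aᵢ` and `E_a(F P)` vanishes whenever `E_a(P)` does. So the P-closure is the
closure operator of the linear matroid of the functionals `E_c`, whose rank on a finite set `T` is
the dimension of the image of the joint evaluation `E_T : R → 𝔽^T`: `B` is P-independent iff `E_B`
is onto, and the P-bases of `Ḡ` inside `G` are the bases of this matroid. The rows of `V_d(T)` span
`E_T(R_{<d})`; multiplying by a variable shows that once this chain stalls it is constant, so it
reaches `E_T(R)` within `dim 𝔽^T = |T|` steps. -/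

open Module

section LinearAlgebra

variable {K V : Type*} [DivisionRing K] [AddCommGroup V] [Module K V]

theorem Submodule.finrank_quotient_add_finrank_map_mkQ {p q : Submodule K V} (h : p ≤ q)
    [FiniteDimensional K (V ⧸ p)] :
    finrank K (V ⧸ q) + finrank K (q.map p.mkQ) = finrank K (V ⧸ p) := by
  rw [← (p.quotientQuotientEquivQuotient q h).finrank_eq]
  exact Submodule.finrank_quotient_add_finrank _

theorem Submodule.finrank_quotient_eq_iff_le {p q : Submodule K V} (h : p ≤ q)
    [FiniteDimensional K (V ⧸ p)] :
    finrank K (V ⧸ q) = finrank K (V ⧸ p) ↔ q ≤ p := by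
  rw [← Submodule.finrank_quotient_add_finrank_map_mkQ h, left_eq_add,
    Submodule.finrank_eq_zero, ← LinearMap.le_ker_iff_map, Submodule.ker_mkQ]

theorem Submodule.le_apply_finrank_of_stalls [FiniteDimensional K V] {W : ℕ → Submodule K V}
    (hW : Monotone W) (hstall : ∀ d, W (d + 1) ≤ W d → W (d + 2) ≤ W (d + 1)) (d : ℕ) :
    W d ≤ W (finrank K V) := by
  set N := finrank K V
  have stalls_from : ∀ d₀, W (d₀ + 1) ≤ W d₀ → ∀ e, d₀ ≤ e → W e ≤ W d₀ := by
    intro d₀ h₀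
    have step : ∀ e, d₀ ≤ e → W (e + 1) ≤ W e := fun e he => by
      induction e, he using Nat.le_induction with
      | base => exact h₀
      | succ e _ ih => exact hstall e ih
    intro e he
    induction e, he using Nat.le_induction with
    | base => exact le_rfl
    | succ e he ih => exact (step e he).trans ih
  obtain ⟨d₀, hd₀N, hd₀⟩ : ∃ d₀ ≤ N, W (d₀ + 1) ≤ W d₀ := by
    by_contra! hgrow
    have hrank : ∀ e ≤ N + 1, e ≤ finrank K (W e) := by
      intro e he
      induction e with
      | zero => exact Nat.zero_le _
      | succ e ih =>
        have hlt := Submodule.finrank_lt_finrank_of_lt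
          (lt_of_le_not_ge (hW (Nat.le_add_right e 1)) (hgrow e (by omega)))
        have := ih (by omega)
        omega
    have := (hrank (N + 1) le_rfl).trans (Submodule.finrank_le (W (N + 1)))
    omega
  rcases le_total d N with hdN | hNd
  · exact hW hdN
  · exact (stalls_from d₀ hd₀ d (hd₀N.trans hNd)).trans (hW hd₀N)

variable {W U : Type*} [AddCommGroup W] [Module K W] [AddCommGroup U] [Module K U]

instance LinearMap.finiteDimensional_quotient_ker (f : V →ₗ[K] W) [FiniteDimensional K f.range] :
    FiniteDimensional K (V ⧸ f.ker) :=
  f.quotKerEquivRange.symm.finiteDimensional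

theorem LinearMap.finrank_range_le_of_ker_le {f : V →ₗ[K] W} {g : V →ₗ[K] U}
    [FiniteDimensional K g.range] (h : g.ker ≤ f.ker) :
    finrank K f.range ≤ finrank K g.range := by
  rw [← f.quotKerEquivRange.finrank_eq, ← g.quotKerEquivRange.finrank_eq,
    ← Submodule.finrank_quotient_add_finrank_map_mkQ h]
  exact Nat.le_add_right _ _

theorem LinearMap.finrank_range_eq_iff_ker_le {f : V →ₗ[K] W} {g : V →ₗ[K] U}
    [FiniteDimensional K g.range] (h : g.ker ≤ f.ker) :
    finrank K f.range = finrank K g.range ↔ f.ker ≤ g.ker := by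
  rw [← f.quotKerEquivRange.finrank_eq, ← g.quotKerEquivRange.finrank_eq,
    Submodule.finrank_quotient_eq_iff_le h]

end LinearAlgebra

section FunctionalFamily

variable {K V ι : Type*} [DivisionRing K] [AddCommGroup V] [Module K V] (e : ι → V →ₗ[K] K)

def jointEval (T : Finset ι) : V →ₗ[K] (T → K) := LinearMap.pi fun c : T => e c

def linClosure (Ω : Set ι) : Set ι := {x | ∀ v, (∀ c ∈ Ω, e c v = 0) → e x v = 0}

noncomputable def jointRank (T : Finset ι) : ℕ := finrank K (jointEval e T).range

variable {e}

@[simp]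
theorem jointEval_apply (T : Finset ι) (v : V) : jointEval e T v = fun c : T => e c v := rfl

theorem mem_ker_jointEval {T : Finset ι} {v : V} :
    v ∈ (jointEval e T).ker ↔ ∀ c ∈ T, e c v = 0 := by
  simp [funext_iff]

theorem subset_linClosure (Ω : Set ι) : Ω ⊆ linClosure e Ω := fun x hx _ hv => hv x hx

theorem linClosure_mono {Ω Ω' : Set ι} (h : Ω ⊆ Ω') : linClosure e Ω ⊆ linClosure e Ω' :=
  fun _ hx v hv => hx v fun c hc => hv c (h hc)

theorem linClosure_subset_linClosure {Ω Ω' : Set ι} (h : Ω' ⊆ linClosure e Ω) :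
    linClosure e Ω' ⊆ linClosure e Ω :=
  fun _ hx v hv => hx v fun _ hc => h hc v hv

theorem coe_subset_linClosure_iff {B T : Finset ι} :
    ↑T ⊆ linClosure e ↑B ↔ (jointEval e B).ker ≤ (jointEval e T).ker := by
  simp only [Set.subset_def, linClosure, SetLike.le_def, mem_ker_jointEval]
  exact ⟨fun h v hv c hc => h c hc v hv, fun h c hc v hv => h hv c hc⟩

theorem ker_jointEval_le {T T' : Finset ι} (h : T ⊆ T') :
    (jointEval e T').ker ≤ (jointEval e T).ker :=
  fun _ hv => mem_ker_jointEval.mpr fun c hc => mem_ker_jointEval.mp hv c (h hc)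

theorem jointRank_le_card (T : Finset ι) : jointRank e T ≤ T.card :=
  (Submodule.finrank_le _).trans_eq (by simp)

theorem jointRank_eq_card_iff {T : Finset ι} :
    jointRank e T = T.card ↔ Function.Surjective (jointEval e T) := by
  rw [jointRank, ← LinearMap.range_eq_top]
  refine ⟨fun h => Submodule.eq_top_of_finrank_eq (by simpa using h), fun h => ?_⟩
  rw [h]
  simp

theorem jointRank_mono {T T' : Finset ι} (h : T ⊆ T') : jointRank e T ≤ jointRank e T' := by
  have hker := ker_jointEval_le (e := e) h
  exact LinearMap.finrank_range_le_of_ker_le hker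

theorem coe_subset_linClosure_iff_jointRank_eq {B T : Finset ι} (h : B ⊆ T) :
    ↑T ⊆ linClosure e ↑B ↔ jointRank e T = jointRank e B := by
  have hker := ker_jointEval_le (e := e) h
  rw [coe_subset_linClosure_iff, jointRank, jointRank, eq_comm]
  exact (LinearMap.finrank_range_eq_iff_ker_le hker).symm

theorem surjective_jointEval_iff {B : Finset ι} :
    Function.Surjective (jointEval e B) ↔ ∀ a ∈ B, a ∉ linClosure e (↑B \ {a}) := by
  classical
  constructor
  · intro hsurj a ha hcl
    obtain ⟨v, hv⟩ := hsurj (Pi.single ⟨a, ha⟩ 1)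
    have hval : ∀ c (hc : c ∈ B), e c v = (Pi.single (⟨a, ha⟩ : B) (1 : K) : B → K) ⟨c, hc⟩ :=
      fun c hc => congrFun hv ⟨c, hc⟩
    have hzero := hcl v fun c hc => by
      rw [hval c (Finset.mem_coe.mp hc.1), Pi.single_eq_of_ne]
      exact fun hca => hc.2 (congrArg Subtype.val hca)
    rw [hval a ha, Pi.single_eq_same] at hzero
    exact one_ne_zero hzero
  · intro hind
    rw [← LinearMap.range_eq_top, eq_top_iff, ← (Pi.basisFun K B).span_eq, Submodule.span_le]
    rintro _ ⟨⟨a, ha⟩, rfl⟩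
    obtain ⟨v, hv, hva⟩ : ∃ v, (∀ c ∈ ↑B \ {a}, e c v = 0) ∧ e a v ≠ 0 := by
      simpa [linClosure] using hind a ha
    refine ⟨(e a v)⁻¹ • v, funext fun ⟨c, hc⟩ => ?_⟩
    by_cases hca : c = a
    · subst hca
      simp [hva]
    · simp [hv c (by simp [hc, hca]), hca]

theorem exists_subset_jointRank_eq_card (G : Finset ι) :
    ∃ B ⊆ G, jointRank e B = B.card ∧ jointRank e G = jointRank e B := by
  classical
  have hempty : jointRank e ∅ = (∅ : Finset ι).card :=
    Nat.eq_zero_of_le_zero (jointRank_le_card ∅)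
  obtain ⟨B, hB, hmax⟩ := Finset.exists_max_image
    (G.powerset.filter fun B => jointRank e B = B.card) Finset.card ⟨∅, by simpa using hempty⟩
  rw [Finset.mem_filter, Finset.mem_powerset] at hB
  refine ⟨B, hB.1, hB.2, (coe_subset_linClosure_iff_jointRank_eq hB.1).mp fun a ha => ?_⟩
  by_contra haB
  have hgrow : jointRank e (insert a B) ≠ jointRank e B := fun h =>
    haB ((coe_subset_linClosure_iff_jointRank_eq (B.subset_insert a)).mpr h (by simp))
  have hcard : (insert a B).card = B.card + 1 :=
    Finset.card_insert_of_notMem fun h => haB (subset_linClosure _ h)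
  have hle := jointRank_le_card (e := e) (insert a B)
  have hmono := jointRank_mono (e := e) (B.subset_insert a)
  have := hmax (insert a B) (by
    rw [Finset.mem_filter, Finset.mem_powerset]
    exact ⟨Finset.insert_subset ha hB.1, by omega⟩)
  omega

end FunctionalFamily

namespace SkewPoly

variable {𝔽 : Type*} [DivisionRing 𝔽] {n : ℕ}

section Multiplication

variable (S : RawMul 𝔽 n)

noncomputable def RawMul.mulLeft_s19 (F : SkewPoly 𝔽 n) : SkewPoly 𝔽 n →+ SkewPoly 𝔽 n :=
  AddMonoidHom.mk' (S.mul F) (S.mul_add F)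

noncomputable def RawMul.mulRight_s19 (G : SkewPoly 𝔽 n) : SkewPoly 𝔽 n →+ SkewPoly 𝔽 n :=
  AddMonoidHom.mk' (S.mul · G) (S.add_mul · · G)

theorem RawMul.mul_zero_s19 (F : SkewPoly 𝔽 n) : S.mul F 0 = 0 := map_zero (S.mulLeft_s19 F)

theorem RawMul.zero_mul_s19 (G : SkewPoly 𝔽 n) : S.mul 0 G = 0 := map_zero (S.mulRight_s19 G)

theorem RawMul.mul_sub_s19 (F G H : SkewPoly 𝔽 n) : S.mul F (G - H) = S.mul F G - S.mul F H :=
  map_sub (S.mulLeft_s19 F) G H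

theorem RawMul.mul_sum {ι : Type*} (s : Finset ι) (F : SkewPoly 𝔽 n) (G : ι → SkewPoly 𝔽 n) :
    S.mul F (∑ i ∈ s, G i) = ∑ i ∈ s, S.mul F (G i) :=
  map_sum (S.mulLeft_s19 F) G s

theorem RawMul.sum_mul {ι : Type*} (s : Finset ι) (F : ι → SkewPoly 𝔽 n) (G : SkewPoly 𝔽 n) :
    S.mul (∑ i ∈ s, F i) G = ∑ i ∈ s, S.mul (F i) G :=
  map_sum (S.mulRight_s19 G) F s

theorem RawMul.single_mul (m : FreeMonoid (Fin n)) (c : 𝔽) (G : SkewPoly 𝔽 n) :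
    S.mul (single m c) G = c • S.mul (single m 1) G := by
  rw [← S.const_mul, ← S.mul_assoc, S.const_mul, Finsupp.smul_single, smul_eq_mul, _root_.mul_one]

theorem RawMul.X_mul_single (i : Fin n) (m : FreeMonoid (Fin n)) :
    S.mul (X 𝔽 i) (single m 1) = single (FreeMonoid.of i * m) 1 :=
  S.mono_mul_mono _ _

variable {S} {σ : 𝔽 → Matrix (Fin n) (Fin n) 𝔽} {δ : 𝔽 → Fin n → 𝔽}

theorem RawMul.X_mul_smul (hS : HasCommRule S σ δ) (j : Fin n) (c : 𝔽) (Q : SkewPoly 𝔽 n) :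
    S.mul (X 𝔽 j) (c • Q) = ∑ k, σ c j k • S.mul (X 𝔽 k) Q + δ c j • Q := by
  rw [← S.const_mul, ← S.mul_assoc, hS j c, S.add_mul, S.sum_mul, S.const_mul]
  congr 1
  exact Finset.sum_congr rfl fun k _ => S.single_mul _ _ _

end Multiplication

section Evaluation

variable (σ : 𝔽 → Matrix (Fin n) (Fin n) 𝔽) (δ : 𝔽 → Fin n → 𝔽)

/-- `fundFn σ δ a m` is the fundamental function `N_m(a)`, determined by `N_1(a) = 1` and
`N_{xᵢ m}(a) = Σⱼ σᵢⱼ(N_m(a)) aⱼ + δᵢ(N_m(a)) = fundStep σ δ a i (N_m(a))`. -/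
def fundStep (a : Fin n → 𝔽) (i : Fin n) (b : 𝔽) : 𝔽 := (σ b *ᵥ a) i + δ b i

def fundFn (a : Fin n → 𝔽) (m : FreeMonoid (Fin n)) : 𝔽 :=
  m.toList.foldr (fundStep σ δ a) 1

noncomputable def evalLin (a : Fin n → 𝔽) : SkewPoly 𝔽 n →ₗ[𝔽] 𝔽 :=
  linearCombination 𝔽 (fundFn σ δ a)

variable {σ δ} {S : RawMul 𝔽 n} (hσ : IsMatrixMorphism σ) (hδ : IsVectorDerivation σ δ)
  (hS : HasCommRule S σ δ)

theorem fundFn_one (a : Fin n → 𝔽) : fundFn σ δ a 1 = 1 := rfl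

theorem fundFn_of_mul (a : Fin n → 𝔽) (i : Fin n) (m : FreeMonoid (Fin n)) :
    fundFn σ δ a (FreeMonoid.of i * m) = fundStep σ δ a i (fundFn σ δ a m) := rfl

theorem evalLin_single (a : Fin n → 𝔽) (m : FreeMonoid (Fin n)) (c : 𝔽) :
    evalLin σ δ a (single m c) = c * fundFn σ δ a m := by
  simp [evalLin]

theorem evalLin_C (a : Fin n → 𝔽) (c : 𝔽) : evalLin σ δ a (C n c) = c := by
  rw [C, evalLin_single, fundFn_one, mul_one]

include hσ hδ

theorem fundStep_add (a : Fin n → 𝔽) (i : Fin n) (b b' : 𝔽) :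
    fundStep σ δ a i (b + b') = fundStep σ δ a i b + fundStep σ δ a i b' := by
  simp only [fundStep, hσ.2.1, hδ.1, Matrix.add_mulVec, Pi.add_apply]
  abel

theorem fundStep_zero (a : Fin n → 𝔽) (i : Fin n) : fundStep σ δ a i 0 = 0 := by
  simpa using fundStep_add hσ hδ a i 0 0

theorem fundStep_one (a : Fin n → 𝔽) (i : Fin n) : fundStep σ δ a i 1 = a i := by
  have hδ1 : δ 1 = 0 := by simpa [hσ.1] using hδ.2 1 1
  simp [fundStep, hσ.1, hδ1]

theorem fundStep_mul (a : Fin n → 𝔽) (j : Fin n) (c d : 𝔽) :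
    fundStep σ δ a j (c * d) = (σ c *ᵥ fun k => fundStep σ δ a k d) j + δ c j * d := by
  simp only [fundStep, hσ.2.2, hδ.2, ← Matrix.mulVec_mulVec, Pi.add_apply]
  rw [show (fun k => (σ d *ᵥ a) k + δ d k) = σ d *ᵥ a + δ d from rfl, Matrix.mulVec_add,
    Pi.add_apply]
  abel

include hS

theorem evalLin_X_mul (a : Fin n → 𝔽) (j : Fin n) (Q : SkewPoly 𝔽 n) :
    evalLin σ δ a (S.mul (X 𝔽 j) Q) = fundStep σ δ a j (evalLin σ δ a Q) := by
  induction Q using Finsupp.induction_linear with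
  | zero => rw [S.mul_zero_s19, map_zero, fundStep_zero hσ hδ]
  | add P Q hP hQ => rw [S.mul_add, map_add, map_add, hP, hQ, fundStep_add hσ hδ]
  | single m c =>
    rw [← mul_one c, ← smul_eq_mul, ← Finsupp.smul_single, S.X_mul_smul hS]
    simp only [map_add, map_sum, map_smul, S.X_mul_single, evalLin_single, fundFn_of_mul,
      one_mul, smul_eq_mul, fundStep_mul hσ hδ, Matrix.mulVec, dotProduct]

theorem evalLin_mul_eq_zero (a : Fin n → 𝔽) {P : SkewPoly 𝔽 n} (hP : evalLin σ δ a P = 0)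
    (F : SkewPoly 𝔽 n) : evalLin σ δ a (S.mul F P) = 0 := by
  induction F using Finsupp.induction_linear with
  | zero => rw [S.zero_mul_s19, map_zero]
  | add F G hF hG => rw [S.add_mul, map_add, hF, hG, add_zero]
  | single m c =>
    rw [S.single_mul, map_smul, smul_eq_zero]
    right
    induction m using FreeMonoid.inductionOn' with
    | one => exact (S.one_mul P).symm ▸ hP
    | of_mul i m ih =>
      rw [← S.X_mul_single, S.mul_assoc, evalLin_X_mul hσ hδ hS, ih, fundStep_zero hσ hδ]

theorem evalLin_mul_congr (a : Fin n → 𝔽) {P Q : SkewPoly 𝔽 n}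
    (h : evalLin σ δ a P = evalLin σ δ a Q) (F : SkewPoly 𝔽 n) :
    evalLin σ δ a (S.mul F P) = evalLin σ δ a (S.mul F Q) := by
  rw [← sub_eq_zero, ← map_sub, ← S.mul_sub_s19]
  exact evalLin_mul_eq_zero hσ hδ hS a (by rw [map_sub, h, sub_self]) F

end Evaluation

section PointIdeal

variable (S : RawMul 𝔽 n)

theorem mul_mem_pointIdeal {a : Fin n → 𝔽} (H : SkewPoly 𝔽 n) {F : SkewPoly 𝔽 n}
    (hF : F ∈ pointIdeal S a) : S.mul H F ∈ pointIdeal S a := by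
  obtain ⟨G, rfl⟩ := hF
  exact ⟨fun i => S.mul H (G i), by simp only [S.mul_sum, S.mul_assoc]⟩

def pointIdealSubmodule (a : Fin n → 𝔽) : Submodule 𝔽 (SkewPoly 𝔽 n) where
  carrier := pointIdeal S a
  zero_mem' := ⟨0, by simp [S.zero_mul_s19]⟩
  add_mem' := by
    rintro _ _ ⟨G, rfl⟩ ⟨G', rfl⟩
    exact ⟨G + G', by simp only [Pi.add_apply, S.add_mul, Finset.sum_add_distrib]⟩
  smul_mem' c F hF := S.const_mul c F ▸ mul_mem_pointIdeal S (C n c) hF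

theorem X_sub_C_mem_pointIdeal (a : Fin n → 𝔽) (i : Fin n) :
    X 𝔽 i - C n (a i) ∈ pointIdeal S a := by
  classical
  refine ⟨Pi.single i (C n 1), ?_⟩
  rw [Finset.sum_eq_single i (fun k _ hk => by rw [Pi.single_eq_of_ne hk, S.zero_mul_s19])
    (by simp), Pi.single_eq_same, S.one_mul]

variable {S} {σ : 𝔽 → Matrix (Fin n) (Fin n) 𝔽} {δ : 𝔽 → Fin n → 𝔽}
  (hσ : IsMatrixMorphism σ) (hδ : IsVectorDerivation σ δ) (hS : HasCommRule S σ δ)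

include hS in
theorem single_sub_C_fundFn_mem_pointIdeal (a : Fin n → 𝔽) (m : FreeMonoid (Fin n)) :
    single m 1 - C n (fundFn σ δ a m) ∈ pointIdeal S a := by
  induction m using FreeMonoid.inductionOn' with
  | one =>
    show C n 1 - C n 1 ∈ pointIdealSubmodule S a
    rw [sub_self]
    exact zero_mem _
  | of_mul j m ih =>
    have hconst : S.mul (X 𝔽 j) (C n (fundFn σ δ a m)) - C n (fundFn σ δ a (.of j * m)) =
        ∑ k, σ (fundFn σ δ a m) j k • (X 𝔽 k - C n (a k)) := by
      rw [hS j, fundFn_of_mul, fundStep]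
      simp only [X, C, smul_sub, Finsupp.smul_single, smul_eq_mul, mul_one,
        Finset.sum_sub_distrib, Matrix.mulVec, dotProduct, Finsupp.single_add,
        Finsupp.single_finsetSum]
      abel
    have hsplit : single (.of j * m) 1 - C n (fundFn σ δ a (.of j * m)) =
        S.mul (X 𝔽 j) (single m 1 - C n (fundFn σ δ a m)) +
          (S.mul (X 𝔽 j) (C n (fundFn σ δ a m)) - C n (fundFn σ δ a (.of j * m))) := by
      rw [S.mul_sub_s19, S.X_mul_single]
      abel
    rw [hsplit, hconst]
    exact add_mem (mul_mem_pointIdeal S _ ih) (sum_mem fun k _ =>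
      (pointIdealSubmodule S a).smul_mem _ (X_sub_C_mem_pointIdeal S a k))

include hS in
theorem sub_C_evalLin_mem_pointIdeal (a : Fin n → 𝔽) (F : SkewPoly 𝔽 n) :
    F - C n (evalLin σ δ a F) ∈ pointIdeal S a := by
  induction F using Finsupp.induction_linear with
  | zero =>
    show 0 - C n (evalLin σ δ a 0) ∈ pointIdealSubmodule S a
    rw [map_zero, C, Finsupp.single_zero, sub_zero]
    exact zero_mem _
  | add F G hF hG =>
    have := (pointIdealSubmodule S a).add_mem hF hG
    rwa [map_add, C, Finsupp.single_add, ← C, ← C, add_sub_add_comm]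
  | single m c =>
    have hsmul : single m c - C n (evalLin σ δ a (single m c)) =
        c • (single m 1 - C n (fundFn σ δ a m)) := by
      rw [evalLin_single, smul_sub, C, C, Finsupp.smul_single, Finsupp.smul_single, smul_eq_mul,
        smul_eq_mul, mul_one]
    rw [hsmul]
    exact (pointIdealSubmodule S a).smul_mem c (single_sub_C_fundFn_mem_pointIdeal hS a m)

include hσ hδ hS in
theorem evalLin_eq_zero_of_mem_pointIdeal {a : Fin n → 𝔽} {F : SkewPoly 𝔽 n}
    (hF : F ∈ pointIdeal S a) : evalLin σ δ a F = 0 := by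
  obtain ⟨G, rfl⟩ := hF
  rw [map_sum]
  refine Finset.sum_eq_zero fun i _ => evalLin_mul_eq_zero hσ hδ hS a ?_ _
  rw [map_sub, evalLin_C, X, evalLin_single, one_mul, ← mul_one (FreeMonoid.of i),
    fundFn_of_mul, fundFn_one, fundStep_one hσ hδ, sub_self]

include hσ hδ hS in
theorem eval_eq_evalLin (a : Fin n → 𝔽) (F : SkewPoly 𝔽 n) : eval S a F = evalLin σ δ a F := by
  have hdecomp : ∀ b, Decomposes S a F b ↔ F - C n b ∈ pointIdeal S a := fun b =>
    ⟨fun ⟨G, hG⟩ => ⟨G, by rw [hG, add_sub_cancel_right]⟩,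
      fun ⟨G, hG⟩ => ⟨G, by rw [← hG, sub_add_cancel]⟩⟩
  have hex : ∃ b, Decomposes S a F b :=
    ⟨_, (hdecomp _).mpr (sub_C_evalLin_mem_pointIdeal hS a F)⟩
  rw [eval, dif_pos hex]
  have := evalLin_eq_zero_of_mem_pointIdeal hσ hδ hS ((hdecomp _).mp hex.choose_spec)
  rwa [map_sub, evalLin_C, sub_eq_zero, eq_comm] at this

include hσ hδ hS in
theorem pClosure_eq_linClosure : pClosure S = linClosure (evalLin σ δ) := by
  ext Ω x
  simp [pClosure, zeroIdeal, linClosure, eval_eq_evalLin hσ hδ hS]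

end PointIdeal

section Vandermonde

variable (𝔽 n) in
def degreeLT (d : ℕ) : Submodule 𝔽 (SkewPoly 𝔽 n) := supported 𝔽 𝔽 {m | m.length < d}

theorem degreeLT_mono : Monotone (degreeLT 𝔽 n) :=
  fun _ _ h => supported_mono fun _ hm => lt_of_lt_of_le hm h

theorem mem_degreeLT_iff {d : ℕ} {F : SkewPoly 𝔽 n} : F ∈ degreeLT 𝔽 n d ↔ deg F < d := by
  rw [degreeLT, mem_supported, deg]
  simp [Set.subset_def]

theorem exists_mem_degreeLT (F : SkewPoly 𝔽 n) : ∃ d, F ∈ degreeLT 𝔽 n d :=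
  ⟨F.support.sup FreeMonoid.length + 1, (mem_supported 𝔽 F).mpr fun _ hm =>
    Nat.lt_succ_of_le (Finset.le_sup (f := FreeMonoid.length) hm)⟩

theorem RawMul.X_mul_mem_degreeLT (S : RawMul 𝔽 n) {d : ℕ} {Q : SkewPoly 𝔽 n}
    (hQ : Q ∈ degreeLT 𝔽 n d) (k : Fin n) : S.mul (X 𝔽 k) Q ∈ degreeLT 𝔽 n (d + 1) := by
  rcases eq_or_ne Q 0 with rfl | hQ0
  · rw [S.mul_zero_s19]
    exact zero_mem _
  have hX : deg (X 𝔽 k) = 1 := by simp [deg, X]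
  rw [mem_degreeLT_iff] at hQ ⊢
  rw [S.deg_mul _ _ (by simp [X]) hQ0, hX]
  revert hQ
  induction deg Q with
  | bot => simp
  | coe e =>
    intro he
    rw [Nat.cast_withBot, WithBot.coe_lt_coe] at he
    rw [Nat.cast_withBot, ← WithBot.coe_one, ← WithBot.coe_add, WithBot.coe_lt_coe]
    omega

variable (σ : 𝔽 → Matrix (Fin n) (Fin n) 𝔽) (δ : 𝔽 → Fin n → 𝔽)

noncomputable def vandermondeSpan (T : Finset (Fin n → 𝔽)) (d : ℕ) : Submodule 𝔽 (T → 𝔽) :=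
  (degreeLT 𝔽 n d).map (jointEval (evalLin σ δ) T)

theorem vandermondeSpan_mono (T : Finset (Fin n → 𝔽)) : Monotone (vandermondeSpan σ δ T) :=
  fun _ _ h => Submodule.map_mono (degreeLT_mono h)

variable {σ δ} {S : RawMul 𝔽 n} (hσ : IsMatrixMorphism σ) (hδ : IsVectorDerivation σ δ)
  (hS : HasCommRule S σ δ)
include hσ hδ hS

theorem vandermondeRank_eq_rank_vandermondeSpan (T : Finset (Fin n → 𝔽)) (d : ℕ) :
    vandermondeRank S T d = Module.rank 𝔽 (vandermondeSpan σ δ T d) := by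
  have hspan : Submodule.span 𝔽 (Set.range fun m : {m : FreeMonoid (Fin n) // m.length < d} =>
      fun c : T => eval S c (single m.1 1)) = vandermondeSpan σ δ T d := by
    rw [vandermondeSpan, degreeLT, supported_eq_span_single, Submodule.map_span, Set.image_image]
    congr 1
    ext v
    simp [eval_eq_evalLin hσ hδ hS]
  rw [vandermondeRank, hspan]

/-- A new row `N_{xⱼ m}` agrees on `T` with `xⱼ Q` for any `Q` of lower degree that agrees with
`N_m` on `T`. -/
theorem vandermondeSpan_add_two_le {T : Finset (Fin n → 𝔽)} {d : ℕ}
    (h : vandermondeSpan σ δ T (d + 1) ≤ vandermondeSpan σ δ T d) :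
    vandermondeSpan σ δ T (d + 2) ≤ vandermondeSpan σ δ T (d + 1) := by
  rw [vandermondeSpan, degreeLT, supported_eq_span_single, Submodule.map_span_le]
  rintro _ ⟨m, hm, rfl⟩
  induction m using FreeMonoid.casesOn with
  | one => exact ⟨single 1 1, single_mem_supported 𝔽 1 (by simp), rfl⟩
  | of_mul j m =>
    have hm : m.length < d + 1 := by simpa [Nat.add_comm 1] using hm
    obtain ⟨Q, hQ, hQm⟩ := h ⟨single m 1, single_mem_supported 𝔽 1 hm, rfl⟩
    refine ⟨S.mul (X 𝔽 j) Q, S.X_mul_mem_degreeLT hQ j, ?_⟩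
    dsimp only
    rw [← S.X_mul_single]
    funext c
    exact evalLin_mul_congr hσ hδ hS c (congrFun hQm c) _

theorem vandermondeSpan_card (T : Finset (Fin n → 𝔽)) :
    vandermondeSpan σ δ T T.card = (jointEval (evalLin σ δ) T).range := by
  refine le_antisymm LinearMap.map_le_range ?_
  rintro _ ⟨F, rfl⟩
  obtain ⟨d, hd⟩ := exists_mem_degreeLT F
  have hN : finrank 𝔽 (T → 𝔽) = T.card := by simp
  exact hN ▸ Submodule.le_apply_finrank_of_stalls (vandermondeSpan_mono σ δ T)
    (fun _ => vandermondeSpan_add_two_le hσ hδ hS) d ⟨F, hd, rfl⟩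

theorem vandermondeRank_card (T : Finset (Fin n → 𝔽)) :
    vandermondeRank S T T.card = jointRank (evalLin σ δ) T := by
  rw [vandermondeRank_eq_rank_vandermondeSpan hσ hδ hS, vandermondeSpan_card hσ hδ hS, jointRank,
    Module.finrank_eq_rank]

end Vandermonde

section PBasis

variable {σ : 𝔽 → Matrix (Fin n) (Fin n) 𝔽} {δ : 𝔽 → Fin n → 𝔽} {S : RawMul 𝔽 n}
  (hσ : IsMatrixMorphism σ) (hδ : IsVectorDerivation σ δ) (hS : HasCommRule S σ δ)
include hσ hδ hS

theorem pIndep_iff_jointRank_eq_card (B : Finset (Fin n → 𝔽)) :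
    PIndep S ↑B ↔ jointRank (evalLin σ δ) B = B.card := by
  rw [jointRank_eq_card_iff, surjective_jointEval_iff, PIndep, pClosure_eq_linClosure hσ hδ hS]
  rfl

theorem isPBasis_pClosure_iff {B G : Finset (Fin n → 𝔽)} (hBG : B ⊆ G) :
    IsPBasis S ↑B (pClosure S ↑G) ↔ jointRank (evalLin σ δ) B = B.card ∧
      jointRank (evalLin σ δ) G = jointRank (evalLin σ δ) B := by
  have hBG' : (↑B : Set (Fin n → 𝔽)) ⊆ ↑G := Finset.coe_subset.mpr hBG
  rw [IsPBasis, pIndep_iff_jointRank_eq_card hσ hδ hS, ← coe_subset_linClosure_iff_jointRank_eq hBG,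
    pClosure_eq_linClosure hσ hδ hS]
  constructor
  · rintro ⟨-, hind, hcl⟩
    exact ⟨hind, hcl ▸ subset_linClosure _⟩
  · rintro ⟨hind, hG⟩
    exact ⟨hBG'.trans (subset_linClosure _), hind,
      (linClosure_mono hBG').antisymm (linClosure_subset_linClosure hG)⟩

theorem card_eq_jointRank_of_isPBasis {B G : Finset (Fin n → 𝔽)}
    (h : IsPBasis S ↑B (pClosure S ↑G)) : B.card = jointRank (evalLin σ δ) G := by
  classical
  obtain ⟨hsub, hind, hcl⟩ := h
  rw [pIndep_iff_jointRank_eq_card hσ hδ hS] at hind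
  rw [pClosure_eq_linClosure hσ hδ hS] at hsub hcl
  have hG : jointRank (evalLin σ δ) (B ∪ G) = jointRank (evalLin σ δ) G :=
    (coe_subset_linClosure_iff_jointRank_eq Finset.subset_union_right).mp
      (Finset.coe_union B G ▸ Set.union_subset hsub (subset_linClosure _))
  have hB : jointRank (evalLin σ δ) (B ∪ G) = jointRank (evalLin σ δ) B :=
    (coe_subset_linClosure_iff_jointRank_eq Finset.subset_union_left).mp
      (Finset.coe_union B G ▸ hcl ▸ Set.union_subset hsub (subset_linClosure _))
  omega

theorem pRank_pClosure (G : Finset (Fin n → 𝔽)) :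
    pRank S (pClosure S ↑G) = jointRank (evalLin σ δ) G := by
  obtain ⟨B, hBG, hind, hrk⟩ := exists_subset_jointRank_eq_card (e := evalLin σ δ) G
  have hranks : {k | ∃ B : Finset (Fin n → 𝔽), IsPBasis S ↑B (pClosure S ↑G) ∧ B.card = k} =
      {jointRank (evalLin σ δ) G} := by
    ext k
    constructor
    · rintro ⟨B', hB', rfl⟩
      exact card_eq_jointRank_of_isPBasis hσ hδ hS hB'
    · rintro rfl
      exact ⟨B, (isPBasis_pClosure_iff hσ hδ hS hBG).mpr ⟨hind, hrk⟩, by omega⟩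
  rw [pRank, hranks, csInf_singleton]

end PBasis

end SkewPoly

theorem stmt19_general {𝔽 : Type*} [DivisionRing 𝔽] {n : ℕ}
    (σ : 𝔽 → Matrix (Fin n) (Fin n) 𝔽) (δ : 𝔽 → Fin n → 𝔽)
    (hσ : IsMatrixMorphism σ) (hδ : IsVectorDerivation σ δ)
    (S : RawMul 𝔽 n) (hS : HasCommRule S σ δ)
    (G : Finset (Fin n → 𝔽)) :
    vandermondeRank S G G.card = (pRank S (pClosure S ↑G) : Cardinal) ∧
    (∀ B : Finset (Fin n → 𝔽), B ⊆ G →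
      (IsPBasis S ↑B (pClosure S ↑G) ↔
        (B.card = pRank S (pClosure S ↑G) ∧
          vandermondeRank S B B.card = (B.card : Cardinal)))) := by
  have hrank := pRank_pClosure hσ hδ hS G
  refine ⟨by rw [vandermondeRank_card hσ hδ hS, hrank], fun B hBG => ?_⟩
  rw [isPBasis_pClosure_iff hσ hδ hS hBG, vandermondeRank_card hσ hδ hS, hrank, Nat.cast_inj]
  omega

/-- For a finite set `G` with `M` elements and `Ω = Ḡ`: the left
row-rank of the skew Vandermonde matrix `V_M(G)` equals `Rk(Ω)`; and `B ⊆ G` is a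
P-basis of `Ω` iff `|B| = Rk(Ω)` and the left row-rank of `V_(|B|)(B)` is `|B|`. -/
theorem stmt19 {𝔽 : Type*} [DivisionRing 𝔽] {n : ℕ} (hn : 0 < n)
    (σ : 𝔽 → Matrix (Fin n) (Fin n) 𝔽) (δ : 𝔽 → Fin n → 𝔽)
    (hσ : IsMatrixMorphism σ) (hδ : IsVectorDerivation σ δ)
    (S : RawMul 𝔽 n) (hS : HasCommRule S σ δ)
    (G : Finset (Fin n → 𝔽)) :
    vandermondeRank S G G.card = (pRank S (pClosure S ↑G) : Cardinal) ∧
    (∀ B : Finset (Fin n → 𝔽), B ⊆ G →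
      (IsPBasis S ↑B (pClosure S ↑G) ↔
        (B.card = pRank S (pClosure S ↑G) ∧
          vandermondeRank S B B.card = (B.card : Cardinal)))) :=
  stmt19_general σ δ hσ hδ S hS G
end
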